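/- A simple augmented tree (X, 𝓔) of an equicontractive IFS of contractive similitudes is Gromov hyperbolic; indeed the lengths of its horizontal geodesics are uniformly bounded. -/

import Mathlib

open Metric Filter

namespace HypIFS

/-- Euclidean space `ℝ^d`. -/
abbrev Euc (d : ℕ) := EuclideanSpace ℝ (Fin d)

/-- The distance `dist(A, B)` between two subsets of a metric space. -/
noncomputable def setDist {E : Type*} [PseudoMetricSpace E] (A B : Set E) : ℝ :=
  sInf (Set.image2 dist A B)

variable {d N : ℕ}

/-- For a word `x = i₁⋯i_k`, the composition `S_x = S_{i₁} ∘ ⋯ ∘ S_{i_k}`. -/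
def sWord (S : Fin N → Euc d → Euc d) : List (Fin N) → Euc d → Euc d :=
  fun w => w.foldr (fun i f => S i ∘ f) id

/-- For a word `x = i₁⋯i_k`, the product `r_x = r_{i₁} ⋯ r_{i_k}` of contraction ratios. -/
def rWord (ρ : Fin N → ℝ) (w : List (Fin N)) : ℝ := (w.map ρ).prod

/-- The coding level `𝓙_n = {i₁⋯i_k : r_{i₁⋯i_k} ≤ rⁿ < r_{i₁⋯i_{k−1}}}`,
with `𝓙_0` consisting of the empty word. -/
def Jlevel (ρ : Fin N → ℝ) (r : ℝ) (n : ℕ) : Set (List (Fin N)) :=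
  if n = 0 then {([] : List (Fin N))}
  else {w | rWord ρ w ≤ r ^ n ∧ r ^ n < rWord ρ w.dropLast}

/-- The vertical (parent–child) edge relation: `x ∈ 𝓙_n` is the initial segment
of `y ∈ 𝓙_{n+1}`. -/
def EV (ρ : Fin N → ℝ) (r : ℝ) (x y : List (Fin N)) : Prop :=
  ∃ n : ℕ, x ∈ Jlevel ρ r n ∧ y ∈ Jlevel ρ r (n + 1) ∧ x <+: y

/-- The horizontal edge relation: `x ≠ y` in the same level `𝓙_n` with
`dist(K_x, K_y) ≤ κ rⁿ`. -/
def EH (S : Fin N → Euc d → Euc d) (ρ : Fin N → ℝ) (r κ : ℝ) (K : Set (Euc d))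
    (x y : List (Fin N)) : Prop :=
  ∃ n : ℕ, x ∈ Jlevel ρ r n ∧ y ∈ Jlevel ρ r n ∧ x ≠ y ∧
    setDist (sWord S x '' K) (sWord S y '' K) ≤ κ * r ^ n

/-- The augmented tree `(X, 𝓔)`, `𝓔 = 𝓔_v ∪ 𝓔_h`, as a graph on the word space
(words belonging to no level `𝓙_n` are isolated vertices). -/
def augIFS (S : Fin N → Euc d → Euc d) (ρ : Fin N → ℝ) (r κ : ℝ) (K : Set (Euc d)) :
    SimpleGraph (List (Fin N)) where
  Adj x y := (EV ρ r x y ∨ EV ρ r y x ∨ EH S ρ r κ K x y ∨ EH S ρ r κ K y x) ∧ x ≠ y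
  symm := by
    constructor
    rintro x y ⟨h1 | h2 | h3 | h4, hne⟩
    · exact ⟨Or.inr (Or.inl h1), hne.symm⟩
    · exact ⟨Or.inl h2, hne.symm⟩
    · exact ⟨Or.inr (Or.inr (Or.inr h3)), hne.symm⟩
    · exact ⟨Or.inr (Or.inr (Or.inl h4)), hne.symm⟩
  loopless := ⟨fun x h => h.2 rfl⟩

/-- A graph is of bounded degree if `sup_x deg(x) < ∞`. -/
def BddDeg {V : Type*} (G : SimpleGraph V) : Prop :=
  ∃ M : ℕ, ∀ x : V, {y | G.Adj x y}.Finite ∧ {y | G.Adj x y}.ncard ≤ M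

variable {d N : ℕ}

/-- Horizontal edge relation for an equicontractive IFS (levels are word
lengths): `|x| = |y|`, `x ≠ y`, `dist(K_x, K_y) ≤ κ r^{|x|}`. -/
def EHe (S : Fin N → Euc d → Euc d) (r κ : ℝ) (K : Set (Euc d))
    (x y : List (Fin N)) : Prop :=
  x.length = y.length ∧ x ≠ y ∧
    setDist (sWord S x '' K) (sWord S y '' K) ≤ κ * r ^ x.length

/-- The augmented tree `(X, 𝓔)` of an equicontractive IFS: `X = Σ*`, vertical
edges join a word to the word with its last letter removed, together with the
horizontal edges. -/
def augE (S : Fin N → Euc d → Euc d) (r κ : ℝ) (K : Set (Euc d)) :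
    SimpleGraph (List (Fin N)) where
  Adj x y := (x = y.dropLast ∨ y = x.dropLast ∨ EHe S r κ K x y ∨ EHe S r κ K y x) ∧ x ≠ y
  symm := by
    constructor
    rintro x y ⟨h1 | h2 | h3 | h4, hne⟩
    · exact ⟨Or.inr (Or.inl h1), hne.symm⟩
    · exact ⟨Or.inl h2, hne.symm⟩
    · exact ⟨Or.inr (Or.inr (Or.inr h3)), hne.symm⟩
    · exact ⟨Or.inr (Or.inr (Or.inl h4)), hne.symm⟩
  loopless := ⟨fun x h => h.2 rfl⟩

/-- The horizontal subgraph `(Σⁿ, 𝓔_h)` (all levels at once; horizontal edges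
stay within one level). -/
def horizE (S : Fin N → Euc d → Euc d) (r κ : ℝ) (K : Set (Euc d)) :
    SimpleGraph (List (Fin N)) where
  Adj x y := (EHe S r κ K x y ∨ EHe S r κ K y x) ∧ x ≠ y
  symm := by
    constructor
    rintro x y ⟨h1 | h2, hne⟩
    · exact ⟨Or.inr h1, hne.symm⟩
    · exact ⟨Or.inl h2, hne.symm⟩
  loopless := ⟨fun x h => h.2 rfl⟩

/-- `T_𝓓` for the horizontal connected component `T` of the word `w`: the union
of `T` and all its descendants (a word is a descendant of `t` iff `t` is one of
its prefixes). -/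
def TD (S : Fin N → Euc d → Euc d) (r κ : ℝ) (K : Set (Euc d))
    (w : List (Fin N)) : Set (List (Fin N)) :=
  {u | ∃ t : List (Fin N), (horizE S r κ K).Reachable w t ∧ t <+: u}

/-- The augmented tree is simple: there are only finitely many horizontal
connected components up to graph isomorphism of the inherited subgraphs on
`T_𝓓`. -/
def SimpleAug (S : Fin N → Euc d → Euc d) (r κ : ℝ) (K : Set (Euc d)) : Prop :=
  ∃ F : Finset (List (Fin N)), ∀ w : List (Fin N), ∃ w' ∈ F,
    Nonempty ((augE S r κ K).induce (TD S r κ K w) ≃g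
              (augE S r κ K).induce (TD S r κ K w'))

/-- The Gromov product `|x ∧ y| = ½(|x| + |y| − d(x,y))` with respect to a root `o`. -/
noncomputable def gprod {V : Type*} (G : SimpleGraph V) (o x y : V) : ℝ :=
  ((G.dist o x : ℝ) + (G.dist o y : ℝ) - (G.dist x y : ℝ)) / 2

/-- Gromov hyperbolicity of a graph with basepoint `o`. -/
def GromovHyperbolic {V : Type*} (G : SimpleGraph V) (o : V) : Prop :=
  ∃ δ : ℝ, 0 ≤ δ ∧ ∀ x y z : V,
    min (gprod G o x z) (gprod G o z y) - δ ≤ gprod G o x y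

/-- `w 0, …, w n` is a horizontal geodesic of the augmented tree of an
equicontractive IFS: consecutive vertices joined by horizontal edges (hence all
in one level) and the path has minimal length. -/
def IsHorizGeodesicE (S : Fin N → Euc d → Euc d) (r κ : ℝ) (K : Set (Euc d))
    (n : ℕ) (w : ℕ → List (Fin N)) : Prop :=
  (∀ i < n, EHe S r κ K (w i) (w (i + 1))) ∧
  (augE S r κ K).dist (w 0) (w n) = n

/-!
If `w₀, …, wₙ` is a horizontal geodesic at level `m`, consecutive cells are `κ rᵐ`-close and
have diameter at most `rᵐ diam K`, so `dist(K_{w₀}, K_{wₙ}) ≤ n (κ + diam K) rᵐ`. The ancestors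
`k` levels up are therefore `κ`-close as soon as `n (κ + diam K) rᵏ ≤ κ`, which gives a path of
length `2k + 1` from `w₀` to `wₙ`; since `k` can be taken of order `log n`, this bounds `n`.

For hyperbolicity, let the confluence level `t(x, y)` be the largest level at which the
ancestors of `x` and `y` are `κ`-close. Going up to that level and across gives
`d(x, y) ≤ |x| + |y| - 2t + 1`. Conversely, a geodesic from `x` to `y` can be projected to the
smallest level `l` it visits without getting longer, and its horizontal part there is itself a
geodesic, hence of bounded length; so the ancestors at level `l - s` are close for a fixed `s`,
and `d(x, y) ≥ |x| + |y| - 2t - 2s`. Thus `|x ∧ y| = t(x, y) + O(1)`, and `t` satisfies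
`min(t(x, z), t(z, y)) ≤ t(x, y) + s` by the triangle inequality for distances between cells.
-/

section SetDist

variable {E : Type*} [PseudoMetricSpace E] {A B C : Set E}

lemma setDist_le_dist {a b : E} (ha : a ∈ A) (hb : b ∈ B) : setDist A B ≤ dist a b :=
  csInf_le ⟨0, by rintro _ ⟨a, -, b, -, rfl⟩; exact dist_nonneg⟩ ⟨a, ha, b, hb, rfl⟩

lemma setDist_self_nonpos (hA : A.Nonempty) : setDist A A ≤ 0 := by
  obtain ⟨a, ha⟩ := hA
  simpa using setDist_le_dist ha ha

lemma setDist_comm (A B : Set E) : setDist A B = setDist B A := by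
  simp only [setDist, Set.image2_swap dist A B, dist_comm]

lemma setDist_le_setDist {A' B' : Set E} (hA : A' ⊆ A) (hB : B' ⊆ B)
    (hA' : A'.Nonempty) (hB' : B'.Nonempty) : setDist A B ≤ setDist A' B' :=
  le_csInf (hA'.image2 hB') <| by
    rintro _ ⟨a, ha, b, hb, rfl⟩
    exact setDist_le_dist (hA ha) (hB hb)

lemma setDist_triangle (hA : A.Nonempty) (hB : B.Nonempty) (hC : C.Nonempty)
    (hBb : Bornology.IsBounded B) :
    setDist A C ≤ setDist A B + diam B + setDist B C := by
  refine le_of_forall_pos_le_add fun ε hε => ?_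
  obtain ⟨_, ⟨a, ha, b, hb, rfl⟩, hab⟩ :=
    Real.lt_sInf_add_pos (hA.image2 (f := dist) hB) (half_pos hε)
  obtain ⟨_, ⟨b', hb', c, hc, rfl⟩, hbc⟩ :=
    Real.lt_sInf_add_pos (hB.image2 (f := dist) hC) (half_pos hε)
  have := dist_le_diam_of_mem hBb hb hb'
  have := setDist_le_dist ha hc
  have := dist_triangle4 a b b' c
  change dist a b < setDist A B + ε / 2 at hab
  change dist b' c < setDist B C + ε / 2 at hbc
  linarith

end SetDist

section Cells

variable {S : Fin N → Euc d → Euc d} {r : ℝ} {K : Set (Euc d)}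

lemma sWord_append (p q : List (Fin N)) : sWord S (p ++ q) = sWord S p ∘ sWord S q := by
  induction p with
  | nil => rfl
  | cons i p ih => exact congrArg (S i ∘ ·) ih

lemma dist_sWord (hS : ∀ j a b, dist (S j a) (S j b) = r * dist a b) (w : List (Fin N))
    (a b : Euc d) : dist (sWord S w a) (sWord S w b) = r ^ w.length * dist a b := by
  induction w with
  | nil => simp [sWord]
  | cons i w ih =>
    simp only [sWord, List.foldr_cons, Function.comp_apply] at ih ⊢
    rw [hS, ih, List.length_cons, pow_succ]
    ring

lemma image_sWord_subset (hK : K = ⋃ j, S j '' K) (w : List (Fin N)) : sWord S w '' K ⊆ K := by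
  induction w with
  | nil => simp [sWord]
  | cons i w ih =>
    rw [show sWord S (i :: w) = S i ∘ sWord S w from rfl, Set.image_comp]
    calc S i '' (sWord S w '' K) ⊆ S i '' K := Set.image_mono ih
      _ ⊆ K := (Set.subset_iUnion (fun j => S j '' K) i).trans_eq hK.symm

lemma image_sWord_subset_of_prefix (hK : K = ⋃ j, S j '' K) {p x : List (Fin N)}
    (h : p <+: x) : sWord S x '' K ⊆ sWord S p '' K := by
  obtain ⟨t, rfl⟩ := h
  rw [sWord_append, Set.image_comp]
  exact Set.image_mono (image_sWord_subset hK t)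

lemma diam_image_sWord_le (hS : ∀ j a b, dist (S j a) (S j b) = r * dist a b) (hr : 0 ≤ r)
    (hKb : Bornology.IsBounded K) (w : List (Fin N)) :
    diam (sWord S w '' K) ≤ r ^ w.length * diam K := by
  refine diam_le_of_forall_dist_le (by positivity) ?_
  rintro _ ⟨a, ha, rfl⟩ _ ⟨b, hb, rfl⟩
  rw [dist_sWord hS]
  exact mul_le_mul_of_nonneg_left (dist_le_diam_of_mem hKb ha hb) (by positivity)

end Cells

section AugmentedTree

variable {S : Fin N → Euc d → Euc d} {r κ : ℝ} {K : Set (Euc d)} {x y : List (Fin N)}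

lemma EHe.symm (h : EHe S r κ K x y) : EHe S r κ K y x := by
  obtain ⟨hlen, hne, hdist⟩ := h
  exact ⟨hlen.symm, hne.symm, by rwa [setDist_comm, ← hlen]⟩

lemma horizE_adj_iff : (horizE S r κ K).Adj x y ↔ EHe S r κ K x y :=
  ⟨fun ⟨h, _⟩ => h.elim id EHe.symm, fun h => ⟨Or.inl h, h.2.1⟩⟩

lemma horizE_le_augE : horizE S r κ K ≤ augE S r κ K :=
  fun _ _ ⟨h, hne⟩ => ⟨Or.inr (Or.inr h), hne⟩

lemma length_eq_of_horizE_adj (h : (horizE S r κ K).Adj x y) : x.length = y.length :=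
  (horizE_adj_iff.1 h).1

lemma augE_adj_dropLast (hx : x ≠ []) : (augE S r κ K).Adj x.dropLast x := by
  refine ⟨Or.inl rfl, fun h => ?_⟩
  have := congrArg List.length h
  have := List.length_pos_iff.2 hx
  simp only [List.length_dropLast] at *
  omega

lemma length_le_of_augE_adj (h : (augE S r κ K).Adj x y) : x.length ≤ y.length + 1 := by
  obtain ⟨rfl | rfl | h | h, -⟩ := h
  · simp only [List.length_dropLast]; omega
  · simp only [List.length_dropLast]; omega
  · exact h.1.le.trans (Nat.le_succ _)
  · exact h.1.ge.trans (Nat.le_succ _)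

lemma take_eq_or_horizE_adj_of_augE_adj {l : ℕ} (h : (augE S r κ K).Adj x y)
    (hx : l ≤ x.length) (hy : l ≤ y.length) :
    x.take l = y.take l ∨ (horizE S r κ K).Adj x y := by
  obtain ⟨rfl | rfl | h' | h', hne⟩ := h
  · left
    rw [List.dropLast_eq_take, List.take_take, min_eq_left (by simpa using hx)]
  · left
    rw [List.dropLast_eq_take, List.take_take, min_eq_left (by simpa using hy)]
  · exact Or.inr ⟨Or.inl h', hne⟩
  · exact Or.inr ⟨Or.inr h', hne⟩

variable (S r κ K) in
lemma exists_augE_walk_take (x : List (Fin N)) (l : ℕ) :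
    ∃ p : (augE S r κ K).Walk (x.take l) x, p.length = x.length - l := by
  induction h : x.length - l generalizing l with
  | zero => exact ⟨.copy .nil rfl (List.take_of_length_le (by omega)), by simp⟩
  | succ k ih =>
    obtain ⟨p, hp⟩ := ih (l + 1) (by omega)
    have hdrop : (x.take (l + 1)).dropLast = x.take l := by
      rw [List.dropLast_eq_take, List.take_take, List.length_take]
      congr 1
      omega
    have hadj : (augE S r κ K).Adj (x.take l) (x.take (l + 1)) :=
      hdrop ▸ augE_adj_dropLast (List.ne_nil_of_length_pos (by rw [List.length_take]; omega))
    exact ⟨.cons hadj p, by simp [hp]⟩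

variable (S r κ K) in
lemma dist_take_le (x : List (Fin N)) (l : ℕ) :
    (augE S r κ K).dist (x.take l) x ≤ x.length - l :=
  let ⟨p, hp⟩ := exists_augE_walk_take S r κ K x l
  hp ▸ SimpleGraph.dist_le p

variable (S r κ K) in
lemma augE_connected : (augE S r κ K).Connected := by
  refine (SimpleGraph.connected_iff _).2 ⟨fun u v => ?_, ⟨[]⟩⟩
  obtain ⟨p, -⟩ := exists_augE_walk_take S r κ K u 0
  obtain ⟨q, -⟩ := exists_augE_walk_take S r κ K v 0
  exact p.reachable.symm.trans q.reachable

lemma length_le_length_add_walk_length {u v : List (Fin N)} (p : (augE S r κ K).Walk u v) :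
    v.length ≤ u.length + p.length := by
  induction p with
  | nil => simp
  | cons h _ ih =>
    have := length_le_of_augE_adj h.symm
    rw [SimpleGraph.Walk.length_cons]
    omega

variable (S r κ K) in
lemma augE_dist_nil (x : List (Fin N)) : (augE S r κ K).dist [] x = x.length := by
  refine le_antisymm (by simpa using dist_take_le S r κ K x 0) ?_
  obtain ⟨p, hp⟩ := (augE_connected S r κ K).exists_walk_length_eq_dist [] x
  simpa [hp] using length_le_length_add_walk_length p

end AugmentedTree

structure IsEquicontractiveAttractor (S : Fin N → Euc d → Euc d) (r : ℝ) (K : Set (Euc d)) :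
    Prop where
  r_pos : 0 < r
  r_lt_one : r < 1
  dist_map : ∀ j a b, dist (S j a) (S j b) = r * dist a b
  isBounded : Bornology.IsBounded K
  nonempty : K.Nonempty
  eq_iUnion : K = ⋃ j, S j '' K

def CloseAt (S : Fin N → Euc d → Euc d) (r κ : ℝ) (K : Set (Euc d)) (l : ℕ)
    (x y : List (Fin N)) : Prop :=
  setDist (sWord S (x.take l) '' K) (sWord S (y.take l) '' K) ≤ κ * r ^ l

section CloseAt

variable {S : Fin N → Euc d → Euc d} {r κ : ℝ} {K : Set (Euc d)} {x y z : List (Fin N)}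
  {l : ℕ}

lemma CloseAt.take_eq_or_horizE_adj (h : CloseAt S r κ K l x y) (hx : l ≤ x.length)
    (hy : l ≤ y.length) :
    x.take l = y.take l ∨ (horizE S r κ K).Adj (x.take l) (y.take l) := by
  refine or_iff_not_imp_left.2 fun hne => horizE_adj_iff.2 ⟨?_, hne, ?_⟩
  · simp [hx, hy]
  · simpa [CloseAt, hx] using h

lemma CloseAt.dist_le (h : CloseAt S r κ K l x y) (hx : l ≤ x.length) (hy : l ≤ y.length) :
    (augE S r κ K).dist x y ≤ (x.length - l) + (y.length - l) + 1 := by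
  have hx' := dist_take_le S r κ K x l
  rw [SimpleGraph.dist_comm] at hx'
  have hy' := dist_take_le S r κ K y l
  have hxy : (augE S r κ K).dist (x.take l) (y.take l) ≤ 1 := by
    rcases h.take_eq_or_horizE_adj hx hy with heq | hadj
    · simp [heq]
    · exact (SimpleGraph.dist_eq_one_iff_adj.2 (horizE_le_augE hadj)).le
  have := (augE_connected S r κ K).dist_triangle (u := x) (v := x.take l) (w := y)
  have := (augE_connected S r κ K).dist_triangle (u := x.take l) (v := y.take l) (w := y)
  omega

lemma closeAt_zero (hκ : 0 < κ) (hK : K.Nonempty) : CloseAt S r κ K 0 x y := by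
  have := setDist_self_nonpos (hK.image (sWord S []))
  simp only [CloseAt, List.take_zero, pow_zero, mul_one]
  linarith

lemma closeAt_sub_of_setDist_le (hK : IsEquicontractiveAttractor S r K) {s : ℕ} {B : ℝ}
    (hs : s ≤ l) (h : setDist (sWord S (x.take l) '' K) (sWord S (y.take l) '' K) ≤ B * r ^ l)
    (hB : B * r ^ s ≤ κ) : CloseAt S r κ K (l - s) x y := by
  have hpre (w : List (Fin N)) : w.take (l - s) <+: w.take l :=
    List.take_isPrefix_take.2 (Or.inl (Nat.sub_le l s))
  calc setDist (sWord S (x.take (l - s)) '' K) (sWord S (y.take (l - s)) '' K)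
      ≤ setDist (sWord S (x.take l) '' K) (sWord S (y.take l) '' K) :=
        setDist_le_setDist (image_sWord_subset_of_prefix hK.eq_iUnion (hpre x))
          (image_sWord_subset_of_prefix hK.eq_iUnion (hpre y))
          (hK.nonempty.image _) (hK.nonempty.image _)
    _ ≤ B * r ^ l := h
    _ = B * r ^ s * r ^ (l - s) := by rw [mul_assoc, ← pow_add, Nat.add_sub_cancel' hs]
    _ ≤ κ * r ^ (l - s) := mul_le_mul_of_nonneg_right hB (pow_nonneg hK.r_pos.le _)

lemma CloseAt.mono (hK : IsEquicontractiveAttractor S r K) (hκ : 0 ≤ κ)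
    (h : CloseAt S r κ K l x y) {l' : ℕ} (hl : l' ≤ l) : CloseAt S r κ K l' x y := by
  have hκr : κ * r ^ (l - l') ≤ κ :=
    mul_le_of_le_one_right hκ (pow_le_one₀ hK.r_pos.le hK.r_lt_one.le)
  simpa [Nat.sub_sub_self hl] using closeAt_sub_of_setDist_le hK (Nat.sub_le l l') h hκr

lemma EHe.closeAt (hK : IsEquicontractiveAttractor S r K) (hκ : 0 ≤ κ)
    (h : EHe S r κ K x y) (hl : l ≤ x.length) : CloseAt S r κ K l x y := by
  have hlen : CloseAt S r κ K x.length x y := by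
    rw [CloseAt, List.take_length, List.take_of_length_le h.1.ge]
    exact h.2.2
  exact hlen.mono hK hκ hl

lemma take_eq_or_horizE_adj_take (hK : IsEquicontractiveAttractor S r K) (hκ : 0 ≤ κ)
    (h : (horizE S r κ K).Adj x y) (hl : l ≤ x.length) :
    x.take l = y.take l ∨ (horizE S r κ K).Adj (x.take l) (y.take l) :=
  ((horizE_adj_iff.1 h).closeAt hK hκ hl).take_eq_or_horizE_adj hl
    (hl.trans_eq (length_eq_of_horizE_adj h))

lemma setDist_take_le_of_closeAt (hK : IsEquicontractiveAttractor S r K) (hz : l ≤ z.length)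
    (hxz : CloseAt S r κ K l x z) (hzy : CloseAt S r κ K l z y) :
    setDist (sWord S (x.take l) '' K) (sWord S (y.take l) '' K) ≤ (2 * κ + diam K) * r ^ l := by
  have hdiam := diam_image_sWord_le hK.dist_map hK.r_pos.le hK.isBounded (z.take l)
  rw [List.length_take, min_eq_left hz] at hdiam
  have := setDist_triangle (hK.nonempty.image (sWord S (x.take l)))
    (hK.nonempty.image (sWord S (z.take l))) (hK.nonempty.image (sWord S (y.take l)))
    (hK.isBounded.subset (image_sWord_subset hK.eq_iUnion _))
  unfold CloseAt at hxz hzy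
  linarith

lemma length_eq_of_horizE_chain {w : ℕ → List (Fin N)} {n : ℕ}
    (hw : ∀ i < n, (horizE S r κ K).Adj (w i) (w (i + 1))) :
    ∀ i ≤ n, (w i).length = (w 0).length
  | 0, _ => rfl
  | i + 1, hi => (length_eq_of_horizE_adj (hw i hi)).symm.trans
      (length_eq_of_horizE_chain hw i (Nat.le_of_succ_le hi))

lemma setDist_le_of_horizE_chain (hK : IsEquicontractiveAttractor S r K)
    {w : ℕ → List (Fin N)} :
    ∀ {n : ℕ}, (∀ i < n, (horizE S r κ K).Adj (w i) (w (i + 1))) →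
      setDist (sWord S (w 0) '' K) (sWord S (w n) '' K) ≤
        n * (κ + diam K) * r ^ (w 0).length
  | 0, _ => by simpa using setDist_self_nonpos (hK.nonempty.image (sWord S (w 0)))
  | n + 1, hw => by
    have ih := setDist_le_of_horizE_chain hK (n := n) fun i hi => hw i (by omega)
    have hlen := length_eq_of_horizE_chain hw n (by omega)
    have hstep := (horizE_adj_iff.1 (hw n (by omega))).2.2
    have hdiam := diam_image_sWord_le hK.dist_map hK.r_pos.le hK.isBounded (w n)
    have := setDist_triangle (hK.nonempty.image (sWord S (w 0)))
      (hK.nonempty.image (sWord S (w n))) (hK.nonempty.image (sWord S (w (n + 1))))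
      (hK.isBounded.subset (image_sWord_subset hK.eq_iUnion _))
    rw [hlen] at hstep hdiam
    push_cast
    linarith

end CloseAt

lemma eventually_mul_pow_lt {r : ℝ} (hr0 : 0 ≤ r) (hr1 : r < 1) (B : ℝ) {c : ℝ} (hc : 0 < c) :
    ∀ᶠ k : ℕ in atTop, (2 * k + 3) * B * r ^ k < c := by
  have hlim : Tendsto (fun k : ℕ => 2 * B * (k * r ^ k) + 3 * B * r ^ k) atTop (nhds 0) := by
    simpa using ((tendsto_self_mul_const_pow_of_lt_one hr0 hr1).const_mul (2 * B)).add
      ((tendsto_pow_atTop_nhds_zero_of_lt_one hr0 hr1).const_mul (3 * B))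
  filter_upwards [hlim.eventually (gt_mem_nhds hc)] with k hk
  linarith

section HorizontalGeodesics

variable {S : Fin N → Euc d → Euc d} {r κ : ℝ} {K : Set (Euc d)}

lemma dist_le_of_setDist_le (hK : IsEquicontractiveAttractor S r K) (hκ : 0 < κ)
    {a b : List (Fin N)} (hab : a.length = b.length) {B : ℝ} {j : ℕ}
    (h : setDist (sWord S a '' K) (sWord S b '' K) ≤ B * r ^ a.length) (hB : B * r ^ j ≤ κ) :
    (augE S r κ K).dist a b ≤ 2 * j + 1 := by
  by_cases hj : j ≤ a.length
  · have hclose := closeAt_sub_of_setDist_le (x := a) (y := b) hK hj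
      (by rwa [List.take_length, List.take_of_length_le hab.ge]) hB
    have := hclose.dist_le (Nat.sub_le _ _) (hab ▸ Nat.sub_le _ _)
    omega
  · have := (closeAt_zero (S := S) (r := r) (x := a) (y := b) hκ hK.nonempty).dist_le
      (Nat.zero_le _) (Nat.zero_le _)
    omega

lemma exists_dist_le_of_setDist_le (hK : IsEquicontractiveAttractor S r K) (hκ : 0 < κ) :
    ∃ L : ℕ, 0 < L ∧ ∀ a b : List (Fin N), a.length = b.length →
      setDist (sWord S a '' K) (sWord S b '' K) ≤
        (augE S r κ K).dist a b * (κ + diam K) * r ^ a.length →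
      (augE S r κ K).dist a b ≤ L := by
  obtain ⟨J, hJ⟩ := eventually_atTop.1
    (eventually_mul_pow_lt hK.r_pos.le hK.r_lt_one (κ + diam K) hκ)
  refine ⟨2 * J + 3, by omega, fun a b hab h => ?_⟩
  by_contra! hlt
  set n := (augE S r κ K).dist a b
  set k := (n - 2) / 2
  have hn : (n : ℝ) ≤ 2 * k + 3 := by exact_mod_cast (by omega : n ≤ 2 * k + 3)
  have hB : n * (κ + diam K) * r ^ k ≤ κ := by
    have : 0 ≤ (κ + diam K) * r ^ k :=
      mul_nonneg (by linarith [diam_nonneg (s := K)]) (pow_nonneg hK.r_pos.le k)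
    nlinarith [hJ k (by omega)]
  have := dist_le_of_setDist_le hK hκ hab h hB
  omega

theorem exists_forall_isHorizGeodesicE_le (hK : IsEquicontractiveAttractor S r K)
    (hκ : 0 < κ) :
    ∃ L : ℕ, 0 < L ∧ ∀ (n : ℕ) (w : ℕ → List (Fin N)),
      IsHorizGeodesicE S r κ K n w → n ≤ L := by
  obtain ⟨L, hL0, hL⟩ := exists_dist_le_of_setDist_le hK hκ
  refine ⟨L, hL0, fun n w ⟨hw, hdist⟩ => ?_⟩
  have hadj : ∀ i < n, (horizE S r κ K).Adj (w i) (w (i + 1)) :=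
    fun i hi => horizE_adj_iff.2 (hw i hi)
  rw [← hdist]
  refine hL _ _ (length_eq_of_horizE_chain hadj n le_rfl).symm ?_
  rw [hdist]
  exact setDist_le_of_horizE_chain hK hadj

end HorizontalGeodesics

section Hyperbolicity

variable {S : Fin N → Euc d → Euc d} {r κ : ℝ} {K : Set (Euc d)}

lemma exists_horizE_walk_take_of_forall_le (hK : IsEquicontractiveAttractor S r K) (hκ : 0 ≤ κ)
    {u v : List (Fin N)} (p : (augE S r κ K).Walk u v) {l : ℕ}
    (hl : ∀ z ∈ p.support, l ≤ z.length) :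
    ∃ q : (horizE S r κ K).Walk (u.take l) (v.take l),
      q.length + (u.length - v.length) ≤ p.length := by
  induction p with
  | nil => exact ⟨.nil, by simp⟩
  | @cons u v' v h p ih =>
    obtain ⟨q, hq⟩ := ih fun z hz => hl z (by simp [hz])
    have hu : l ≤ u.length := hl u p.support.mem_cons_self
    have hv' : l ≤ v'.length := hl v' (by simp)
    have hlen := length_le_of_augE_adj h
    rw [SimpleGraph.Walk.length_cons]
    rcases take_eq_or_horizE_adj_of_augE_adj h hu hv' with heq | hadj
    · exact ⟨q.copy heq.symm rfl, by rw [SimpleGraph.Walk.length_copy]; omega⟩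
    have hlen' := length_eq_of_horizE_adj hadj
    rcases take_eq_or_horizE_adj_take hK hκ hadj hu with heq | hadj'
    · exact ⟨q.copy heq.symm rfl, by rw [SimpleGraph.Walk.length_copy]; omega⟩
    · exact ⟨.cons hadj' q, by rw [SimpleGraph.Walk.length_cons]; omega⟩

lemma exists_level_horizE_walk_take (hK : IsEquicontractiveAttractor S r K) (hκ : 0 ≤ κ)
    {x y : List (Fin N)} (p : (augE S r κ K).Walk x y) :
    ∃ l ≤ x.length, l ≤ y.length ∧ ∃ q : (horizE S r κ K).Walk (x.take l) (y.take l),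
      q.length + (x.length - l) + (y.length - l) ≤ p.length := by
  obtain ⟨z, hz, hmin⟩ := p.support.toFinset.exists_min_image List.length ⟨x, by simp⟩
  rw [List.mem_toFinset] at hz
  have hl (v) (hv : v ∈ p.support) : z.length ≤ v.length := hmin v (List.mem_toFinset.2 hv)
  obtain ⟨q₁, hq₁⟩ := exists_horizE_walk_take_of_forall_le hK hκ (p.takeUntil z hz)
    fun v hv => hl v (p.support_takeUntil_subset_support hz hv)
  obtain ⟨q₂, hq₂⟩ := exists_horizE_walk_take_of_forall_le hK hκ (p.dropUntil z hz).reverse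
    fun v hv => hl v (p.support_dropUntil_subset_support hz (by simpa using hv))
  have hsplit := congrArg SimpleGraph.Walk.length (p.take_spec hz)
  simp only [SimpleGraph.Walk.length_append, SimpleGraph.Walk.length_reverse] at hsplit hq₂
  refine ⟨z.length, hl x p.start_mem_support, hl y p.end_mem_support, q₁.append q₂.reverse, ?_⟩
  simp only [SimpleGraph.Walk.length_append, SimpleGraph.Walk.length_reverse]
  omega

open scoped Classical in
noncomputable def confluenceLevel (S : Fin N → Euc d → Euc d) (r κ : ℝ) (K : Set (Euc d))
    (x y : List (Fin N)) : ℕ :=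
  Nat.findGreatest (fun l => CloseAt S r κ K l x y) (min x.length y.length)

variable (S r κ K) in
open scoped Classical in
lemma confluenceLevel_le (x y : List (Fin N)) :
    confluenceLevel S r κ K x y ≤ min x.length y.length :=
  Nat.findGreatest_le _

open scoped Classical in
lemma closeAt_confluenceLevel (hκ : 0 < κ) (hK : K.Nonempty) (x y : List (Fin N)) :
    CloseAt S r κ K (confluenceLevel S r κ K x y) x y :=
  Nat.findGreatest_spec (P := fun l => CloseAt S r κ K l x y) (Nat.zero_le _) (closeAt_zero hκ hK)

open scoped Classical in
lemma le_confluenceLevel {x y : List (Fin N)} {l : ℕ} (h : CloseAt S r κ K l x y)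
    (hl : l ≤ min x.length y.length) : l ≤ confluenceLevel S r κ K x y :=
  Nat.le_findGreatest hl h

lemma dist_add_two_mul_confluenceLevel_le (hκ : 0 < κ) (hK : K.Nonempty) (x y : List (Fin N)) :
    (augE S r κ K).dist x y + 2 * confluenceLevel S r κ K x y ≤ x.length + y.length + 1 := by
  have hle := confluenceLevel_le S r κ K x y
  have := (closeAt_confluenceLevel (S := S) (r := r) hκ hK x y).dist_le (by omega) (by omega)
  omega

lemma length_add_length_le (hK : IsEquicontractiveAttractor S r K) (hκ : 0 < κ) {L s : ℕ}
    (hL : ∀ a b : List (Fin N), a.length = b.length →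
      setDist (sWord S a '' K) (sWord S b '' K) ≤
        (augE S r κ K).dist a b * (κ + diam K) * r ^ a.length →
      (augE S r κ K).dist a b ≤ L)
    (hs : L * (κ + diam K) * r ^ s ≤ κ) (x y : List (Fin N)) :
    x.length + y.length ≤ (augE S r κ K).dist x y + 2 * confluenceLevel S r κ K x y + 2 * s := by
  obtain ⟨p, hp⟩ := (augE_connected S r κ K).exists_walk_length_eq_dist x y
  obtain ⟨l, hlx, hly, q, hq⟩ := exists_level_horizE_walk_take hK hκ.le p
  have hxl : (x.take l).length = l := by simpa using hlx
  have hyl : (y.take l).length = l := by simpa using hly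
  have hqdist : q.length ≤ (augE S r κ K).dist (x.take l) (y.take l) := by
    have hx := dist_take_le S r κ K x l
    have hy := dist_take_le S r κ K y l
    have := (augE_connected S r κ K).dist_triangle (u := x) (v := x.take l) (w := y)
    have := (augE_connected S r κ K).dist_triangle (u := x.take l) (v := y.take l) (w := y)
    rw [SimpleGraph.dist_comm] at hx
    omega
  have hset : setDist (sWord S (x.take l) '' K) (sWord S (y.take l) '' K) ≤
      (augE S r κ K).dist (x.take l) (y.take l) * (κ + diam K) * r ^ l := by
    have hchain := setDist_le_of_horizE_chain hK (w := q.getVert) (n := q.length)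
      fun i hi => q.adj_getVert_succ hi
    rw [q.getVert_zero, q.getVert_length, hxl] at hchain
    refine hchain.trans (mul_le_mul_of_nonneg_right (mul_le_mul_of_nonneg_right ?_ ?_) ?_)
    · exact_mod_cast hqdist
    · linarith [diam_nonneg (s := K)]
    · exact pow_nonneg hK.r_pos.le l
  have hL' := hL _ _ (hxl.trans hyl.symm) (by rwa [hxl])
  by_cases hsl : s ≤ l
  · have hclose : CloseAt S r κ K (l - s) x y := by
      refine closeAt_sub_of_setDist_le hK hsl (hset.trans ?_) hs
      refine mul_le_mul_of_nonneg_right (mul_le_mul_of_nonneg_right ?_ ?_) ?_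
      · exact_mod_cast hL'
      · linarith [diam_nonneg (s := K)]
      · exact pow_nonneg hK.r_pos.le l
    have := le_confluenceLevel hclose (by omega)
    omega
  · omega

lemma min_confluenceLevel_le (hK : IsEquicontractiveAttractor S r K) (hκ : 0 < κ) {s : ℕ}
    (hs : (2 * κ + diam K) * r ^ s ≤ κ) (x y z : List (Fin N)) :
    min (confluenceLevel S r κ K x z) (confluenceLevel S r κ K z y) ≤
      confluenceLevel S r κ K x y + s := by
  set l := min (confluenceLevel S r κ K x z) (confluenceLevel S r κ K z y)
  have hxz := confluenceLevel_le S r κ K x z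
  have hzy := confluenceLevel_le S r κ K z y
  have h₁ := (closeAt_confluenceLevel hκ hK.nonempty x z).mono hK hκ.le
    (l' := l) (min_le_left _ _)
  have h₂ := (closeAt_confluenceLevel hκ hK.nonempty z y).mono hK hκ.le
    (l' := l) (min_le_right _ _)
  by_cases hsl : s ≤ l
  · have hclose := closeAt_sub_of_setDist_le hK hsl
      (setDist_take_le_of_closeAt hK (by omega) h₁ h₂) hs
    have := le_confluenceLevel hclose (by omega)
    omega
  · omega

end Hyperbolicity

lemma gromovHyperbolic_of_abs_gprod_sub_le {V : Type*} (G : SimpleGraph V) (o : V)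
    (t : V → V → ℝ) (c : ℝ) (hgprod : ∀ x y, |gprod G o x y - t x y| ≤ c)
    (ht : ∀ x y z, min (t x z) (t z y) ≤ t x y + c) : GromovHyperbolic G o := by
  refine ⟨3 * c, by linarith [(abs_nonneg _).trans (hgprod o o)], fun x y z => ?_⟩
  have hxz := abs_le.1 (hgprod x z)
  have hzy := abs_le.1 (hgprod z y)
  have hxy := abs_le.1 (hgprod x y)
  have := ht x y z
  have : min (gprod G o x z) (gprod G o z y) ≤ min (t x z) (t z y) + c := by
    rw [← min_add_add_right]
    exact min_le_min (by linarith) (by linarith)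
  linarith

theorem gromovHyperbolic_augE {S : Fin N → Euc d → Euc d} {r κ : ℝ} {K : Set (Euc d)}
    (hK : IsEquicontractiveAttractor S r K) (hκ : 0 < κ) :
    GromovHyperbolic (augE S r κ K) [] := by
  obtain ⟨L, -, hL⟩ := exists_dist_le_of_setDist_le hK hκ
  obtain ⟨s, hs⟩ := (((tendsto_pow_atTop_nhds_zero_of_lt_one hK.r_pos.le hK.r_lt_one).const_mul
    (L * (κ + diam K) + (2 * κ + diam K))).eventually (gt_mem_nhds (by rwa [mul_zero]))).exists
  have hD := diam_nonneg (s := K)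
  have hrs := pow_nonneg hK.r_pos.le s
  rw [add_mul] at hs
  have hs₁ : L * (κ + diam K) * r ^ s ≤ κ := by
    linarith [mul_nonneg (by linarith : 0 ≤ 2 * κ + diam K) hrs]
  have hs₂ : (2 * κ + diam K) * r ^ s ≤ κ := by
    linarith [mul_nonneg (mul_nonneg (Nat.cast_nonneg L) (by linarith : 0 ≤ κ + diam K)) hrs]
  refine gromovHyperbolic_of_abs_gprod_sub_le _ _ (fun x y => confluenceLevel S r κ K x y)
    (s + 1 / 2) (fun x y => ?_) (fun x y z => ?_)
  · have hlo : ((augE S r κ K).dist x y : ℝ) + 2 * confluenceLevel S r κ K x y ≤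
        x.length + y.length + 1 := by
      exact_mod_cast dist_add_two_mul_confluenceLevel_le hκ hK.nonempty x y
    have hup : (x.length : ℝ) + y.length ≤
        (augE S r κ K).dist x y + 2 * confluenceLevel S r κ K x y + 2 * s := by
      exact_mod_cast length_add_length_le hK hκ hL hs₁ x y
    rw [gprod, augE_dist_nil, augE_dist_nil, abs_le]
    constructor <;> linarith
  · have := (Nat.cast_le (α := ℝ)).2 (min_confluenceLevel_le hK hκ hs₂ x y z)
    push_cast at this
    linarith

theorem simple_implies_hyperbolic_general {d N : ℕ}
    (S : Fin N → Euc d → Euc d) (r κ : ℝ) (K : Set (Euc d))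
    (hr0 : 0 < r) (hr1 : r < 1)
    (hsim : ∀ j a b, dist (S j a) (S j b) = r * dist a b)
    (hκ : 0 < κ)
    (hKc : IsCompact K) (hKne : K.Nonempty) (hKinv : K = ⋃ j, S j '' K) :
    GromovHyperbolic (augE S r κ K) ([] : List (Fin N)) ∧
    ∃ L : ℕ, 0 < L ∧ ∀ (n : ℕ) (w : ℕ → List (Fin N)),
      IsHorizGeodesicE S r κ K n w → n ≤ L := by
  have hK : IsEquicontractiveAttractor S r K := ⟨hr0, hr1, hsim, hKc.isBounded, hKne, hKinv⟩
  exact ⟨gromovHyperbolic_augE hK hκ, exists_forall_isHorizGeodesicE_le hK hκ⟩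

/-- A simple augmented tree of an equicontractive IFS is Gromov hyperbolic;
indeed the lengths of its horizontal geodesics are uniformly bounded. -/
theorem simple_implies_hyperbolic {d N : ℕ} (hN : 2 ≤ N)
    (S : Fin N → Euc d → Euc d) (r κ : ℝ) (K : Set (Euc d))
    (hr0 : 0 < r) (hr1 : r < 1)
    (hsim : ∀ j a b, dist (S j a) (S j b) = r * dist a b)
    (hκ : 0 < κ)
    (hKc : IsCompact K) (hKne : K.Nonempty) (hKinv : K = ⋃ j, S j '' K)
    (hsimple : SimpleAug S r κ K) :
    GromovHyperbolic (augE S r κ K) ([] : List (Fin N)) ∧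
    ∃ L : ℕ, 0 < L ∧ ∀ (n : ℕ) (w : ℕ → List (Fin N)),
      IsHorizGeodesicE S r κ K n w → n ≤ L :=
  simple_implies_hyperbolic_general S r κ K hr0 hr1 hsim hκ hKc hKne hKinv

end HypIFS
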